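/- arXiv:1502.06531 — 2 statements merged into one kernel-verified Lean document; each statement's English description precedes it below -/
import Mathlib

section
/- Let F : 2^V → ℝ be submodular with F(∅)=0, let s* be the minimizer of ∑_{i∈V} log(1+exp(−s_i)) over B(F), and define approximate marginals p_i = σ(−s*_i) = 1/(1+exp(s*_i)). Then thresholding the marginals at 1/2 recovers the MAP: { v : p_v > 1/2 } and { v : p_v ≥ 1/2 } are the unique minimal and maximal minimizers of F. -/
/-- A set function is submodular iff it has diminishing marginal gains. -/
def Submodular {V : Type*} [DecidableEq V] (F : Finset V → ℝ) : Prop :=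
  ∀ A B : Finset V, A ⊆ B → ∀ x ∉ B,
    F (insert x B) - F B ≤ F (insert x A) - F A

/-- The base polytope `B(F)` of a normalized submodular function. -/
def basePolytope {V : Type*} [Fintype V] [DecidableEq V] (F : Finset V → ℝ) :
    Set (V → ℝ) :=
  {s | (∀ A : Finset V, ∑ i ∈ A, s i ≤ F A) ∧ ∑ i : V, s i = F Finset.univ}

/-!
`φ(t) = log (1 + exp (-t))` is strictly convex, so at the minimiser `s` of `∑ φ (s i)` over
`B(F)` no mass can be moved from a coordinate `w` to a coordinate `u` with `s u < s w`. Such a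
move `s + t (e_u - e_w)` stays in `B(F)` for small `t > 0` unless some tight set contains `u`
but not `w`. Hence the smallest tight set containing `u` lies in `{s ≤ s u}`, and every set
`{s < c}` or `{s ≤ c}` is a union of such sets. By submodularity tight sets are closed under
`∪` and `∩`, so `{s < 0}` and `{s ≤ 0}` are tight. A tight set `T` with `s ≤ 0` on `T` and
`s ≥ 0` off `T` minimises `F`, because `F T = s(T) ≤ s(A) ≤ F A`; and if `A` minimises `F`
then `s(A) = s({s < 0})`, which forces `{s < 0} ⊆ A ⊆ {s ≤ 0}`.
-/

open Finset

namespace Submodular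

variable {V : Type*} [DecidableEq V] {F : Finset V → ℝ}

theorem sub_le_sub_of_subset (hF : Submodular F) {C D : Finset V} (hCD : C ⊆ D)
    (X : Finset V) (hX : Disjoint X D) : F (D ∪ X) - F D ≤ F (C ∪ X) - F C := by
  induction X using Finset.induction_on with
  | empty => simp
  | @insert x X hx ih =>
    obtain ⟨hxD, hXD⟩ := disjoint_insert_left.1 hX
    have hstep := hF (C ∪ X) (D ∪ X) (union_subset_union hCD subset_rfl) x
      (by simp [hxD, hx])
    rw [union_insert, union_insert]
    linarith [ih hXD]

theorem union_add_inter_le (hF : Submodular F) (A B : Finset V) :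
    F (A ∪ B) + F (A ∩ B) ≤ F A + F B := by
  have h := hF.sub_le_sub_of_subset (inter_subset_left (s₂ := B)) (B \ A) sdiff_disjoint
  have hB : A ∩ B ∪ B \ A = B := by rw [inter_comm]; exact sup_inf_sdiff B A
  rw [union_sdiff_self_eq_union, hB] at h
  linarith

end Submodular

def IsTight {V : Type*} (F : Finset V → ℝ) (s : V → ℝ) (A : Finset V) : Prop :=
  ∑ i ∈ A, s i = F A

namespace IsTight

variable {V : Type*} [DecidableEq V] {F : Finset V → ℝ} {s : V → ℝ} {A B : Finset V}

theorem union (hF : Submodular F) (hs : ∀ A, ∑ i ∈ A, s i ≤ F A)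
    (hA : IsTight F s A) (hB : IsTight F s B) : IsTight F s (A ∪ B) := by
  unfold IsTight at *
  linarith [hF.union_add_inter_le A B, sum_union_inter (s₁ := A) (s₂ := B) (f := s),
    hs (A ∪ B), hs (A ∩ B)]

theorem inter (hF : Submodular F) (hs : ∀ A, ∑ i ∈ A, s i ≤ F A)
    (hA : IsTight F s A) (hB : IsTight F s B) : IsTight F s (A ∩ B) := by
  unfold IsTight at *
  linarith [hF.union_add_inter_le A B, sum_union_inter (s₁ := A) (s₂ := B) (f := s),
    hs (A ∪ B), hs (A ∩ B)]

theorem le_of_nonpos_of_nonneg (hs : ∀ A, ∑ i ∈ A, s i ≤ F A) {T : Finset V}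
    (hT : IsTight F s T) (hnonpos : ∀ i ∈ T, s i ≤ 0) (hnonneg : ∀ i ∉ T, 0 ≤ s i)
    (A : Finset V) : F T ≤ F A := by
  have hdiff := sum_sdiff_sub_sum_sdiff (s₁ := T) (s₂ := A) (f := s)
  have h₁ : ∑ i ∈ T \ A, s i ≤ 0 := sum_nonpos fun i hi => hnonpos i (mem_sdiff.1 hi).1
  have h₂ : 0 ≤ ∑ i ∈ A \ T, s i := sum_nonneg fun i hi => hnonneg i (mem_sdiff.1 hi).2
  have hT' : ∑ i ∈ T, s i = F T := hT
  linarith [hs A]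

end IsTight

theorem StrictConvexOn.map_add_add_map_sub_lt {D : Set ℝ} {φ : ℝ → ℝ}
    (hφ : StrictConvexOn ℝ D φ) {a b t : ℝ} (ha : a ∈ D) (hb : b ∈ D) (ht : 0 < t)
    (htb : t < b - a) : φ (a + t) + φ (b - t) < φ a + φ b := by
  set l := t / (b - a)
  have hba : 0 < b - a := ht.trans htb
  have hl0 : 0 < l := div_pos ht hba
  have hl1 : l < 1 := (div_lt_one hba).2 htb
  have h₁ := hφ.2 ha hb (sub_pos.1 hba).ne (sub_pos.2 hl1) hl0 (sub_add_cancel 1 l)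
  have h₂ := hφ.2 ha hb (sub_pos.1 hba).ne hl0 (sub_pos.2 hl1) (add_sub_cancel l 1)
  have e₁ : (1 - l) • a + l • b = a + t := by simp only [l, smul_eq_mul]; field_simp; ring
  have e₂ : l • a + (1 - l) • b = b - t := by simp only [l, smul_eq_mul]; field_simp; ring
  rw [e₁] at h₁
  rw [e₂] at h₂
  simp only [smul_eq_mul] at h₁ h₂
  linarith

theorem hasDerivAt_log_one_add_exp_neg (t : ℝ) :
    HasDerivAt (fun t => Real.log (1 + Real.exp (-t))) (-1 / (Real.exp t + 1)) t := by
  have h := (((Real.hasDerivAt_exp (-t)).comp t (hasDerivAt_neg t)).const_add 1).log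
    (add_pos one_pos (Real.exp_pos _)).ne'
  refine h.congr_deriv ?_
  simp only [Function.comp, Real.exp_neg]
  field_simp

theorem strictConvexOn_log_one_add_exp_neg :
    StrictConvexOn ℝ Set.univ fun t => Real.log (1 + Real.exp (-t)) := by
  refine StrictMonoOn.strictConvexOn_of_deriv convex_univ
    (fun t _ => (hasDerivAt_log_one_add_exp_neg t).continuousAt.continuousWithinAt) ?_
  intro a _ b _ hab
  simp only [(hasDerivAt_log_one_add_exp_neg _).deriv, neg_div, neg_lt_neg_iff]
  exact one_div_lt_one_div_of_lt (by positivity) (by linarith [Real.exp_lt_exp.2 hab])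

theorem half_lt_one_div_one_add_exp_iff (x : ℝ) : 1 / 2 < 1 / (1 + Real.exp x) ↔ x < 0 := by
  rw [one_div_lt_one_div two_pos (by positivity), ← Real.exp_lt_one_iff]
  constructor <;> intro h <;> linarith

theorem half_le_one_div_one_add_exp_iff (x : ℝ) : 1 / 2 ≤ 1 / (1 + Real.exp x) ↔ x ≤ 0 := by
  rw [one_div_le_one_div two_pos (by positivity), ← Real.exp_le_one_iff]
  constructor <;> intro h <;> linarith

section BasePolytope

variable {V : Type*} [Fintype V] [DecidableEq V] {F : Finset V → ℝ} {s : V → ℝ}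

theorem le_of_forall_isTight_mem {φ : ℝ → ℝ} (hφ : StrictConvexOn ℝ Set.univ φ)
    (hs : s ∈ basePolytope F)
    (hmin : ∀ z ∈ basePolytope F, ∑ i, φ (s i) ≤ ∑ i, φ (z i))
    {u w : V} (huw : ∀ A, u ∈ A → IsTight F s A → w ∈ A) : s w ≤ s u := by
  obtain ⟨hfeas, hsum⟩ := hs
  by_contra! hlt
  have hne : u ≠ w := by rintro rfl; exact lt_irrefl _ hlt
  obtain ⟨ε, hε, hslack⟩ :
      ∃ ε > 0, ∀ A : Finset V, u ∈ A → w ∉ A → ∑ i ∈ A, s i + ε ≤ F A := by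
    obtain ⟨A₀, hA₀, hA₀_min⟩ := exists_min_image
      (univ.filter fun A : Finset V => u ∈ A ∧ w ∉ A) (fun A => F A - ∑ i ∈ A, s i)
      ⟨{u}, by simp [hne.symm]⟩
    simp only [mem_filter, mem_univ, true_and] at hA₀ hA₀_min
    have hA₀_slack : ∑ i ∈ A₀, s i < F A₀ :=
      (hfeas A₀).lt_of_ne fun h => hA₀.2 (huw A₀ hA₀.1 h)
    exact ⟨F A₀ - ∑ i ∈ A₀, s i, by linarith,
      fun A hu hw => by linarith [hA₀_min A ⟨hu, hw⟩]⟩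
  set t := min ε ((s w - s u) / 2)
  have ht : 0 < t := lt_min hε (by linarith)
  have htε : t ≤ ε := min_le_left _ _
  set z : V → ℝ := s + Pi.single u t - Pi.single w t
  have hz_sum : ∀ A : Finset V, ∑ i ∈ A, z i =
      ∑ i ∈ A, s i + (if u ∈ A then t else 0) - (if w ∈ A then t else 0) := fun A => by
    simp only [z, Pi.add_apply, Pi.sub_apply, sum_sub_distrib, sum_add_distrib, sum_pi_single']
  have hz : z ∈ basePolytope F := by
    refine ⟨fun A => ?_, by simpa [hz_sum] using hsum⟩
    rw [hz_sum]
    by_cases huA : u ∈ A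
    · by_cases hwA : w ∈ A
      · simp only [huA, hwA, if_true]; linarith [hfeas A]
      · simp only [huA, hwA, if_true, if_false]; linarith [hslack A huA hwA]
    · split_ifs <;> linarith [hfeas A]
  have hdecr : ∑ i, φ (z i) < ∑ i, φ (s i) := by
    have hchange : ∑ i, (φ (z i) - φ (s i)) =
        (φ (s u + t) - φ (s u)) + (φ (s w - t) - φ (s w)) := by
      rw [Fintype.sum_eq_add u w hne fun x hx => by simp [z, hx.1, hx.2]]
      simp [z, hne, hne.symm]
    have := hφ.map_add_add_map_sub_lt (Set.mem_univ (s u)) (Set.mem_univ (s w)) ht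
      (by linarith [min_le_right ε ((s w - s u) / 2)])
    rw [sum_sub_distrib] at hchange
    linarith
  exact (hmin z hz).not_gt hdecr

theorem isTight_filter_of_le_imp (hF : Submodular F) (hF0 : F ∅ = 0)
    (hs : s ∈ basePolytope F)
    (hexch : ∀ u w, (∀ A, u ∈ A → IsTight F s A → w ∈ A) → s w ≤ s u)
    (P : V → Prop) [DecidablePred P] (hP : ∀ u w, P u → s w ≤ s u → P w) :
    IsTight F s (univ.filter P) := by
  classical
  let D : V → Finset V := fun u => (univ.filter fun A => u ∈ A ∧ IsTight F s A).inf id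
  have hD_tight : ∀ u, IsTight F s (D u) := fun u =>
    inf_induction (p := IsTight F s) hs.2 (fun _ h₁ _ h₂ => h₁.inter hF hs.1 h₂)
      fun A hA => (mem_filter.1 hA).2.2
  have hD_mem : ∀ u, u ∈ D u := fun u => mem_inf.2 fun A hA => (mem_filter.1 hA).2.1
  have hD_le : ∀ u, ∀ w ∈ D u, s w ≤ s u := fun u w hw => hexch u w fun A hu hA =>
    mem_inf.1 hw A (mem_filter.2 ⟨mem_univ _, hu, hA⟩)
  have hsup : (univ.filter P).sup D = univ.filter P := by
    ext w
    simp only [mem_sup, mem_filter, mem_univ, true_and]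
    exact ⟨fun ⟨u, hu, hw⟩ => hP u w hu (hD_le u w hw), fun hw => ⟨w, hw, hD_mem w⟩⟩
  rw [← hsup]
  exact sup_induction (p := IsTight F s) (by simp [IsTight, hF0])
    (fun _ h₁ _ h₂ => h₁.union hF hs.1 h₂) fun u _ => hD_tight u

theorem filter_neg_subset_and_subset_filter_nonpos {A : Finset V}
    (h : ∑ i ∈ A, s i ≤ ∑ i ∈ univ.filter (s · < 0), s i) :
    univ.filter (s · < 0) ⊆ A ∧ A ⊆ univ.filter (s · ≤ 0) := by
  set N := univ.filter (s · < 0)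
  have hdiff := sum_sdiff_sub_sum_sdiff (s₁ := N) (s₂ := A) (f := s)
  have hA_N : ∀ i ∈ A \ N, 0 ≤ s i := fun i hi => by simpa [N] using (mem_sdiff.1 hi).2
  have hN_A : ∀ i ∈ N \ A, s i ≤ 0 := fun i hi => by
    simpa [N] using (mem_filter.1 (mem_sdiff.1 hi).1).2.le
  have h₁ := sum_nonneg hA_N
  have h₂ := sum_nonpos hN_A
  have hzero₁ := (sum_eq_zero_iff_of_nonneg hA_N).1 (by linarith)
  have hzero₂ := (sum_eq_zero_iff_of_nonpos hN_A).1 (by linarith)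
  refine ⟨fun i hi => ?_, fun i hi => ?_⟩
  · have hneg : s i < 0 := (mem_filter.1 hi).2
    by_contra hiA
    exact hneg.ne (hzero₂ i (mem_sdiff.2 ⟨hi, hiA⟩))
  · refine mem_filter.2 ⟨mem_univ i, ?_⟩
    by_cases hiN : i ∈ N
    · exact (mem_filter.1 hiN).2.le
    · exact (hzero₁ i (mem_sdiff.2 ⟨hi, hiN⟩)).le

end BasePolytope

/-- if `s*` minimizes `∑ log(1+exp(-sᵢ))` over `B(F)` and
`pᵥ = 1/(1+exp(s*ᵥ))` are the approximate marginals, then thresholding the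
marginals at `1/2` recovers the MAP: `{v : pᵥ > 1/2}` and `{v : pᵥ ≥ 1/2}` are
the unique minimal and maximal minimizers of `F`. -/
theorem stmt_6 {V : Type*} [Fintype V] [DecidableEq V]
    (F : Finset V → ℝ) (hsub : Submodular F) (hF0 : F ∅ = 0)
    (s : V → ℝ) (hs : s ∈ basePolytope F)
    (hmin : ∀ z ∈ basePolytope F,
      ∑ i : V, Real.log (1 + Real.exp (-(s i)))
        ≤ ∑ i : V, Real.log (1 + Real.exp (-(z i))))
    (p : V → ℝ) (hp : ∀ v, p v = 1 / (1 + Real.exp (s v))) :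
    (∀ A : Finset V, F (Finset.univ.filter fun v => 1/2 < p v) ≤ F A) ∧
    (∀ A : Finset V, F (Finset.univ.filter fun v => 1/2 ≤ p v) ≤ F A) ∧
    (∀ A : Finset V, (∀ C : Finset V, F A ≤ F C) →
      (Finset.univ.filter fun v => 1/2 < p v) ⊆ A ∧
      A ⊆ (Finset.univ.filter fun v => 1/2 ≤ p v)) := by
  have hexch : ∀ u w, (∀ A, u ∈ A → IsTight F s A → w ∈ A) → s w ≤ s u :=
    fun _ _ => le_of_forall_isTight_mem strictConvexOn_log_one_add_exp_neg hs hmin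
  have hneg : IsTight F s (univ.filter (s · < 0)) :=
    isTight_filter_of_le_imp hsub hF0 hs hexch _ fun _ _ hu hw => hw.trans_lt hu
  have hnonpos : IsTight F s (univ.filter (s · ≤ 0)) :=
    isTight_filter_of_le_imp hsub hF0 hs hexch _ fun _ _ hu hw => hw.trans hu
  have hlt : (univ.filter fun v => 1/2 < p v) = univ.filter (s · < 0) := by
    simp only [hp, half_lt_one_div_one_add_exp_iff]
  have hle : (univ.filter fun v => 1/2 ≤ p v) = univ.filter (s · ≤ 0) := by
    simp only [hp, half_le_one_div_one_add_exp_iff]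
  rw [hlt, hle]
  refine ⟨hneg.le_of_nonpos_of_nonneg hs.1 (fun i hi => (mem_filter.1 hi).2.le)
      (fun i hi => by simpa using hi),
    hnonpos.le_of_nonpos_of_nonneg hs.1 (fun i hi => (mem_filter.1 hi).2)
      fun i hi => (not_le.1 (by simpa using hi)).le,
    fun A hA => filter_neg_subset_and_subset_filter_nonpos ?_⟩
  calc ∑ i ∈ A, s i ≤ F A := hs.1 A
    _ ≤ F (univ.filter (s · < 0)) := hA _
    _ = ∑ i ∈ univ.filter (s · < 0), s i := hneg.symm
end

section
/- Let F : 2^V → ℝ be submodular with F(∅)=0. Then by Fenchel duality, min_{s∈B(F)} ∑_{i∈V} log(1+exp(−s_i)) = max_{p∈[0,1]^V} ( H[p] − f(p) ), where f is the Lovász extension of F and H[p] = ∑_{i∈V} ( −p_i log p_i − (1−p_i) log(1−p_i) ) is the entropy of independent Bernoulli variables with means p. -/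
/-- The Lovász extension of a normalized set function on `[0,1]^V`, via the
level-set integral formula `f(p) = ∫₀¹ F({i : pᵢ ≥ t}) dt`. -/
noncomputable def lovasz {V : Type*} [Fintype V] [DecidableEq V]
    (F : Finset V → ℝ) (p : V → ℝ) : ℝ :=
  ∫ t in (0:ℝ)..1, F (Finset.univ.filter fun i => t ≤ p i)

/-- The entropy of independent Bernoulli variables with means `p`
(with the convention `0·log 0 = 0`, which holds since `Real.log 0 = 0`). -/
noncomputable def bernoulliEntropy {V : Type*} [Fintype V] (p : V → ℝ) : ℝ :=
  ∑ i : V, (-(p i) * Real.log (p i) - (1 - p i) * Real.log (1 - p i))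

/-!
The objective `Φ(s) = ∑ᵢ log (1 + e^{-sᵢ})` is continuous and `B(F)` is a nonempty compact convex
set, so `Φ` attains its minimum on `B(F)` at some `s`. For `p ∈ [0,1]^V`, ordering `V` by
decreasing `p` makes every level set `{i | t ≤ pᵢ}` a prefix of the order, on which `F` agrees
with the greedy vertex `g ∈ B(F)` of that order; the layer-cake formula then gives
`f(p) = ⟨p, g⟩`, while `⟨p, s⟩ ≤ f(p)` whenever `s(A) ≤ F(A)` for all `A`. The negative gradient
of `Φ` at `s` is `p = σ(-s)`, so the first-order optimality condition says that `s` maximises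
`⟨p, ·⟩` on `B(F)`, whence `f(p) = ⟨p, s⟩`. Finally, Fenchel's inequality
`h(t) - t a ≤ log (1 + e^{-a})` for the binary entropy `h`, with equality at `t = σ(-a)`,
shows that `H[q] - f(q) ≤ H[q] - ⟨q, s⟩ ≤ Φ(s) = H[p] - f(p)` for every `q ∈ [0,1]^V`.
-/

open Finset Real

section Greedy

variable {V : Type*} [Fintype V] {n : ℕ}

def prefixSet (e : Fin n ≃ V) (k : ℕ) : Finset V :=
  {i | (e.symm i : ℕ) < k}

def greedyVertex (F : Finset V → ℝ) (e : Fin n ≃ V) (i : V) : ℝ :=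
  F (prefixSet e (e.symm i + 1)) - F (prefixSet e (e.symm i))

variable {F : Finset V → ℝ} (e : Fin n ≃ V)

@[simp]
lemma mem_prefixSet {k : ℕ} {i : V} : i ∈ prefixSet e k ↔ (e.symm i : ℕ) < k := by
  simp [prefixSet]

@[simp]
lemma prefixSet_zero : prefixSet e 0 = ∅ := by
  ext; simp

lemma prefixSet_of_le {k : ℕ} (hk : n ≤ k) : prefixSet e k = univ := by
  ext i; simpa using (e.symm i).isLt.trans_le hk

lemma apply_notMem_prefixSet (j : Fin n) : e j ∉ prefixSet e j := by
  simp

lemma greedyVertex_apply (j : Fin n) :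
    greedyVertex F e (e j) = F (prefixSet e (j + 1)) - F (prefixSet e j) := by
  simp [greedyVertex]

lemma exists_equiv_antitone_comp (p : V → ℝ) :
    ∃ e : Fin (Fintype.card V) ≃ V, Antitone (p ∘ e) := by
  let e₀ := (Fintype.equivFin V).symm
  refine ⟨(Tuple.sort fun j => -p (e₀ j)).trans e₀, fun a b hab => ?_⟩
  simpa using Tuple.monotone_sort (fun j => -p (e₀ j)) hab

lemma exists_filter_le_eq_prefixSet {p : V → ℝ} (hpe : Antitone (p ∘ e)) (t : ℝ) :
    ∃ k ≤ n, ({i | t ≤ p i} : Finset V) = prefixSet e k := by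
  have hlower : IsLowerSet {j : Fin n | t ≤ p (e j)} := fun a b hba ha => ha.trans (hpe hba)
  rcases hlower.eq_univ_or_Iio with h | ⟨a, h⟩
  · refine ⟨n, le_rfl, ?_⟩
    ext i
    simpa using Set.ext_iff.1 h (e.symm i)
  · refine ⟨a, a.isLt.le, ?_⟩
    ext i
    simpa using Set.ext_iff.1 h (e.symm i)

variable [DecidableEq V]

lemma prefixSet_succ (j : Fin n) : prefixSet e (j + 1) = insert (e j) (prefixSet e j) := by
  ext i
  rw [mem_insert, mem_prefixSet, mem_prefixSet, Nat.lt_succ_iff_lt_or_eq, or_comm,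
    ← Fin.ext_iff, Equiv.symm_apply_eq]

lemma sum_greedyVertex_prefixSet (hF0 : F ∅ = 0) {k : ℕ} (hk : k ≤ n) :
    ∑ i ∈ prefixSet e k, greedyVertex F e i = F (prefixSet e k) := by
  induction k with
  | zero => simp [hF0]
  | succ k ih =>
    let j : Fin n := ⟨k, hk⟩
    rw [show k = j from rfl, prefixSet_succ, sum_insert (apply_notMem_prefixSet e j),
      ih (by omega), greedyVertex_apply, prefixSet_succ, sub_add_cancel]

lemma sum_greedyVertex_inter_prefixSet_le (hsub : Submodular F) (hF0 : F ∅ = 0)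
    (B : Finset V) {k : ℕ} (hk : k ≤ n) :
    ∑ i ∈ B ∩ prefixSet e k, greedyVertex F e i ≤ F (B ∩ prefixSet e k) := by
  induction k with
  | zero => simp [hF0]
  | succ k ih =>
    let j : Fin n := ⟨k, hk⟩
    rw [show k = j from rfl, prefixSet_succ]
    by_cases hjB : e j ∈ B
    · have hj : e j ∉ B ∩ prefixSet e j := fun h => apply_notMem_prefixSet e j (mem_inter.1 h).2
      rw [inter_insert_of_mem hjB, sum_insert hj, greedyVertex_apply, prefixSet_succ]
      have := hsub (B ∩ prefixSet e j) (prefixSet e j) inter_subset_right (e j)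
        (apply_notMem_prefixSet e j)
      linarith [ih (by omega)]
    · rw [inter_insert_of_notMem hjB]
      exact ih (by omega)

lemma greedyVertex_mem_basePolytope (hsub : Submodular F) (hF0 : F ∅ = 0) :
    greedyVertex F e ∈ basePolytope F := by
  refine ⟨fun B => ?_, ?_⟩
  · simpa [prefixSet_of_le e le_rfl] using sum_greedyVertex_inter_prefixSet_le e hsub hF0 B le_rfl
  · simpa [prefixSet_of_le e le_rfl] using sum_greedyVertex_prefixSet e hF0 le_rfl

lemma apply_filter_le_eq_sum_greedyVertex (hF0 : F ∅ = 0) {p : V → ℝ} (hpe : Antitone (p ∘ e))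
    (t : ℝ) : F {i | t ≤ p i} = ∑ i ∈ ({i | t ≤ p i} : Finset V), greedyVertex F e i := by
  obtain ⟨k, hk, hlevel⟩ := exists_filter_le_eq_prefixSet e hpe t
  rw [hlevel, sum_greedyVertex_prefixSet e hF0 hk]

end Greedy

section LovaszExtension

open MeasureTheory

variable {V : Type*} [Fintype V]

lemma sum_filter_le_eq_sum_indicator (p s : V → ℝ) (t : ℝ) :
    ∑ i ∈ ({i | t ≤ p i} : Finset V), s i = ∑ i, {x | x ≤ p i}.indicator (fun _ => s i) t := by
  rw [sum_filter]
  rfl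

lemma intervalIntegrable_indicator_le_const (c x a b : ℝ) :
    IntervalIntegrable ({t | t ≤ c}.indicator fun _ => x) volume a b :=
  intervalIntegrable_iff.2 (intervalIntegrable_const.def'.indicator measurableSet_Iic)

lemma intervalIntegrable_sum_filter_le (p s : V → ℝ) (a b : ℝ) :
    IntervalIntegrable (fun t => ∑ i ∈ ({i | t ≤ p i} : Finset V), s i) volume a b := by
  have hlayer : (fun t => ∑ i ∈ ({i | t ≤ p i} : Finset V), s i)
      = ∑ i, {t | t ≤ p i}.indicator fun _ => s i := by
    funext t
    rw [sum_filter_le_eq_sum_indicator, Finset.sum_apply]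
  rw [hlayer]
  exact IntervalIntegrable.sum univ fun i _ => intervalIntegrable_indicator_le_const _ _ _ _

lemma integral_sum_filter_le {p : V → ℝ} (hp : ∀ i, p i ∈ Set.Icc (0:ℝ) 1) (s : V → ℝ) :
    ∫ t in (0:ℝ)..1, ∑ i ∈ ({i | t ≤ p i} : Finset V), s i = ∑ i, p i * s i := by
  simp_rw [sum_filter_le_eq_sum_indicator]
  rw [intervalIntegral.integral_finsetSum]
  · refine sum_congr rfl fun i _ => ?_
    rw [intervalIntegral.integral_indicator (hp i), intervalIntegral.integral_const, sub_zero,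
      smul_eq_mul]
  · exact fun i _ => intervalIntegrable_indicator_le_const _ _ _ _

variable [DecidableEq V] {F : Finset V → ℝ} {p : V → ℝ}

lemma lovasz_eq_sum_mul_greedyVertex (hF0 : F ∅ = 0) (hp : ∀ i, p i ∈ Set.Icc (0:ℝ) 1) {n : ℕ}
    {e : Fin n ≃ V} (hpe : Antitone (p ∘ e)) : lovasz F p = ∑ i, p i * greedyVertex F e i := by
  simp_rw [lovasz, apply_filter_le_eq_sum_greedyVertex e hF0 hpe]
  exact integral_sum_filter_le hp _

lemma sum_mul_le_lovasz (hF0 : F ∅ = 0) (hp : ∀ i, p i ∈ Set.Icc (0:ℝ) 1) {s : V → ℝ}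
    (hs : ∀ A : Finset V, ∑ i ∈ A, s i ≤ F A) : ∑ i, p i * s i ≤ lovasz F p := by
  obtain ⟨e, hpe⟩ := exists_equiv_antitone_comp p
  rw [← integral_sum_filter_le hp, lovasz_eq_sum_mul_greedyVertex hF0 hp hpe,
    ← integral_sum_filter_le hp]
  refine intervalIntegral.integral_mono_on zero_le_one (intervalIntegrable_sum_filter_le _ _ _ _)
    (intervalIntegrable_sum_filter_le _ _ _ _) fun t _ => ?_
  rw [← apply_filter_le_eq_sum_greedyVertex e hF0 hpe]
  exact hs _

lemma exists_mem_basePolytope_lovasz_eq (hsub : Submodular F) (hF0 : F ∅ = 0)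
    (hp : ∀ i, p i ∈ Set.Icc (0:ℝ) 1) :
    ∃ g ∈ basePolytope F, lovasz F p = ∑ i, p i * g i := by
  obtain ⟨e, hpe⟩ := exists_equiv_antitone_comp p
  exact ⟨_, greedyVertex_mem_basePolytope e hsub hF0, lovasz_eq_sum_mul_greedyVertex hF0 hp hpe⟩

end LovaszExtension

lemma log_sigmoid (x : ℝ) : log (sigmoid x) = -log (1 + exp (-x)) := by
  rw [sigmoid_def, log_inv]

lemma log_one_add_exp (x : ℝ) : log (1 + exp x) = x + log (1 + exp (-x)) := by
  have h : 1 + exp x = exp x * (1 + exp (-x)) := by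
    rw [mul_add, mul_one, ← exp_add, add_neg_cancel, exp_zero, add_comm]
  rw [h, log_mul (exp_pos x).ne' (by positivity), log_exp]

lemma hasDerivAt_log_one_add_exp_neg_s12 (x : ℝ) :
    HasDerivAt (fun y => log (1 + exp (-y))) (-sigmoid (-x)) x := by
  have h := (((hasDerivAt_neg x).exp).const_add 1).log (by positivity)
  convert h using 1
  rw [← sigmoid_mul_rexp_neg, sigmoid_def]
  field_simp

lemma mul_log_sub_mul_log_le {t q : ℝ} (ht : 0 ≤ t) (hq : 0 < q) :
    t * log q - t * log t ≤ q - t := by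
  rcases ht.eq_or_lt with rfl | ht
  · simpa using hq.le
  have h := log_le_sub_one_of_pos (div_pos hq ht)
  rw [log_div hq.ne' ht.ne'] at h
  have := mul_le_mul_of_nonneg_left h ht.le
  rwa [mul_sub, mul_sub, mul_div_cancel₀ _ ht.ne', mul_one] at this

lemma binEntropy_sub_mul_le {t : ℝ} (ht₀ : 0 ≤ t) (ht₁ : t ≤ 1) (x : ℝ) :
    binEntropy t - t * x ≤ log (1 + exp (-x)) := by
  have h₁ := mul_log_sub_mul_log_le ht₀ (sigmoid_pos (-x))
  have h₂ := mul_log_sub_mul_log_le (sub_nonneg.2 ht₁) (sigmoid_pos x)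
  rw [log_sigmoid, neg_neg, log_one_add_exp] at h₁
  rw [log_sigmoid] at h₂
  have h₃ := sigmoid_neg x
  rw [binEntropy, log_inv, log_inv]
  linarith

lemma binEntropy_sigmoid_neg_sub_mul (x : ℝ) :
    binEntropy (sigmoid (-x)) - sigmoid (-x) * x = log (1 + exp (-x)) := by
  rw [binEntropy, log_inv, log_inv, ← sigmoid_neg, neg_neg, log_sigmoid, log_sigmoid, neg_neg,
    log_one_add_exp, neg_neg, sigmoid_neg]
  ring

section BasePolytope

variable {V : Type*} [Fintype V] [DecidableEq V] {F : Finset V → ℝ}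

lemma isClosed_basePolytope : IsClosed (basePolytope F) := by
  simp only [basePolytope, Set.ofPred_and, Set.ofPred_forall]
  exact (isClosed_iInter fun A => isClosed_le (by fun_prop) continuous_const).inter
    (isClosed_eq (by fun_prop) continuous_const)

lemma basePolytope_subset_pi :
    basePolytope F ⊆ Set.univ.pi fun i => Set.Icc (F univ - F (univ.erase i)) (F {i}) := by
  rintro s ⟨hle, hsum⟩ i -
  have := add_sum_erase univ s (mem_univ i)
  constructor <;> linarith [hle (univ.erase i), hle {i}, sum_singleton s i]

lemma isCompact_basePolytope : IsCompact (basePolytope F) :=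
  (isCompact_univ_pi fun _ => isCompact_Icc).of_isClosed_subset isClosed_basePolytope
    basePolytope_subset_pi

lemma convex_basePolytope : Convex ℝ (basePolytope F) := by
  rintro s ⟨hs, hs_univ⟩ t ⟨ht, ht_univ⟩ a b ha hb hab
  simp only [basePolytope, Set.mem_ofPred_eq, Pi.add_apply, Pi.smul_apply, smul_eq_mul,
    sum_add_distrib, ← mul_sum]
  refine ⟨fun A => ?_, by rw [hs_univ, ht_univ, ← add_mul, hab, one_mul]⟩
  calc a * ∑ i ∈ A, s i + b * ∑ i ∈ A, t i ≤ a * F A + b * F A := by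
        gcongr
        exacts [hs A, ht A]
    _ = F A := by rw [← add_mul, hab, one_mul]

end BasePolytope

section FirstOrder

variable {V : Type*} [Fintype V]

lemma hasFDerivAt_sum_log_one_add_exp_neg (s : V → ℝ) :
    HasFDerivAt (fun s : V → ℝ => ∑ i, log (1 + exp (-s i)))
      (∑ i, (-sigmoid (-s i)) • ContinuousLinearMap.proj (R := ℝ) (φ := fun _ => ℝ) i) s := by
  have hterm (i : V) : HasFDerivAt (fun s : V → ℝ => log (1 + exp (-s i)))
      ((-sigmoid (-s i)) • ContinuousLinearMap.proj (R := ℝ) (φ := fun _ => ℝ) i) s := by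
    exact (hasDerivAt_log_one_add_exp_neg_s12 (s i)).comp_hasFDerivAt s
      (hasFDerivAt_apply (𝕜 := ℝ) i s)
  exact HasFDerivAt.fun_sum fun i _ => hterm i

lemma sum_sigmoid_neg_mul_le_of_isMinOn {K : Set (V → ℝ)} (hK : Convex ℝ K) {s t : V → ℝ}
    (hs : s ∈ K) (ht : t ∈ K) (hmin : IsMinOn (fun s : V → ℝ => ∑ i, log (1 + exp (-s i))) K s) :
    ∑ i, sigmoid (-s i) * t i ≤ ∑ i, sigmoid (-s i) * s i := by
  have h := hmin.localize.hasFDerivWithinAt_nonneg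
    (hasFDerivAt_sum_log_one_add_exp_neg s).hasFDerivWithinAt
    (sub_mem_posTangentConeAt_of_segment_subset (hK.segment_subset hs ht))
  simp only [_root_.sum_apply, _root_.smul_apply, ContinuousLinearMap.proj_apply, Pi.sub_apply,
    smul_eq_mul, mul_sub, sum_sub_distrib, neg_mul, sum_neg_distrib] at h
  linarith

end FirstOrder

section Entropy

variable {V : Type*} [Fintype V]

lemma bernoulliEntropy_eq_sum_binEntropy (p : V → ℝ) :
    bernoulliEntropy p = ∑ i, binEntropy (p i) := by
  refine sum_congr rfl fun i _ => ?_
  rw [binEntropy, log_inv, log_inv]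
  ring

lemma bernoulliEntropy_sub_sum_mul_le {p : V → ℝ} (hp : ∀ i, p i ∈ Set.Icc (0:ℝ) 1)
    (s : V → ℝ) : bernoulliEntropy p - ∑ i, p i * s i ≤ ∑ i, log (1 + exp (-s i)) := by
  rw [bernoulliEntropy_eq_sum_binEntropy, ← sum_sub_distrib]
  exact sum_le_sum fun i _ => binEntropy_sub_mul_le (hp i).1 (hp i).2 (s i)

lemma bernoulliEntropy_sigmoid_neg_sub_sum_mul (s : V → ℝ) :
    bernoulliEntropy (fun i => sigmoid (-s i)) - ∑ i, sigmoid (-s i) * s i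
      = ∑ i, log (1 + exp (-s i)) := by
  rw [bernoulliEntropy_eq_sum_binEntropy, ← sum_sub_distrib]
  exact sum_congr rfl fun i _ => binEntropy_sigmoid_neg_sub_mul (s i)

end Entropy

/-- Fenchel duality:
`min_{s∈B(F)} ∑ log(1+exp(-sᵢ)) = max_{p∈[0,1]^V} (H[p] - f(p))`. -/
theorem stmt_12 {V : Type*} [Fintype V] [DecidableEq V]
    (F : Finset V → ℝ) (hsub : Submodular F) (hF0 : F ∅ = 0) :
    ∃ m : ℝ,
      IsLeast {x : ℝ | ∃ s ∈ basePolytope F,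
        x = ∑ i : V, Real.log (1 + Real.exp (-(s i)))} m ∧
      IsGreatest {x : ℝ | ∃ p : V → ℝ, (∀ i, p i ∈ Set.Icc (0:ℝ) 1) ∧
        x = bernoulliEntropy p - lovasz F p} m := by
  obtain ⟨g₀, hg₀, -⟩ :=
    exists_mem_basePolytope_lovasz_eq hsub hF0 (p := 0) fun _ => ⟨le_rfl, zero_le_one⟩
  have hcont : Continuous fun s : V → ℝ => ∑ i, log (1 + exp (-s i)) :=
    continuous_iff_continuousAt.2 fun s => (hasFDerivAt_sum_log_one_add_exp_neg s).continuousAt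
  obtain ⟨s, hs, hmin⟩ := isCompact_basePolytope.exists_isMinOn ⟨g₀, hg₀⟩ hcont.continuousOn
  set p : V → ℝ := fun i => sigmoid (-s i)
  have hp (i : V) : p i ∈ Set.Icc (0:ℝ) 1 := ⟨sigmoid_nonneg _, sigmoid_le_one _⟩
  obtain ⟨g, hg, hlov⟩ := exists_mem_basePolytope_lovasz_eq hsub hF0 hp
  have hlov_p : lovasz F p = ∑ i, p i * s i :=
    (hlov.trans_le (sum_sigmoid_neg_mul_le_of_isMinOn convex_basePolytope hs hg hmin)).antisymm
      (sum_mul_le_lovasz hF0 hp hs.1)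
  refine ⟨∑ i, log (1 + exp (-s i)), ⟨⟨s, hs, rfl⟩, ?_⟩, ⟨p, hp, ?_⟩, ?_⟩
  · rintro _ ⟨t, ht, rfl⟩
    exact hmin ht
  · rw [hlov_p, bernoulliEntropy_sigmoid_neg_sub_sum_mul]
  · rintro _ ⟨q, hq, rfl⟩
    linarith [sum_mul_le_lovasz hF0 hq hs.1, bernoulliEntropy_sub_sum_mul_le hq s]
end
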